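/- Let (V, r, parent) be an arborescence with edge weights c, w : V → ℝ such that c v > 0 and w v > 0 for all v ≠ r, satisfying both the combined triangle inequality and the combined 2-optimality condition. Let m be the number of non-root vertices (the number of edges) and suppose c(A) ≥ 18 · w(A), where c(A) = Σ_{v ≠ r} c(v) and w(A) = Σ_{v ≠ r} w(v). Then c(A) ≤ 12 · (Real.log m / Real.log (Real.log m)) · w(A). -/

import Mathlib

/-- `(r, parent)` is an arborescence on `V`: the root is a fixed point of
`parent`, and every vertex reaches the root by iterating `parent`. -/
def IsArborescence {V : Type} (r : V) (parent : V → V) : Prop :=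
  parent r = r ∧ ∀ v : V, ∃ n : ℕ, parent^[n] v = r

open Classical in
/-- The children of a vertex `y`. -/
noncomputable def children {V : Type} [Fintype V] (parent : V → V) (y : V) : Finset V :=
  Finset.univ.filter fun u => parent u = y ∧ u ≠ y

open Classical in
/-- The descendants of a vertex `v` (including `v` itself): the vertex set of the
sub-arborescence below the edge entering `v`. -/
noncomputable def desc {V : Type} [Fintype V] (parent : V → V) (v : V) : Finset V :=
  Finset.univ.filter fun u => ∃ n : ℕ, parent^[n] u = v

open Classical in
/-- The non-root vertices, corresponding to the edges of the arborescence. -/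
noncomputable def nonRoot {V : Type} [Fintype V] (r : V) : Finset V :=
  Finset.univ.filter fun v => v ≠ r

/-- The combined triangle inequality. -/
def CombinedTriangle {V : Type} [Fintype V] (r : V) (parent : V → V) (c w : V → ℝ) : Prop :=
  ∀ v : V, v ≠ r → c v ≤ w v + ∑ u ∈ children parent v, c u

open Classical in
/-- The combined 2-optimality condition. -/
noncomputable def CombinedTwoOpt {V : Type} [Fintype V] (r : V) (parent : V → V) (c w : V → ℝ) : Prop :=
  ∀ v : V, v ≠ r → ∀ z ∈ children parent v,
    c v + c z ≤ w v + ∑ u ∈ (children parent v).erase z, c u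


/-!
Fix `K > 1` and write `C(v)`, `W(v)`, `N(v)` for the `c`-weight, the `w`-weight and the number of
vertices of the subtree hanging from the edge into `v`. Induction on subtrees gives
`C(v) + K c(v) ≤ (2K + log_K N(v)) W(v)` (`boundCoeff K N = 2K + log_K N`).

In the induction step, 2-optimality against the most expensive child, of cost `M`, gives
`c(v) + 2M ≤ w(v) + ∑ c(z)`. At most `K` children `z` have `K N(z) > N(v)`, and each costs at most
`M`. Every other child has `log_K N(z) ≤ log_K N(v) - 1`, and the unit of coefficient it gains pays
for `c(z) ≤ W(z)`, which is the triangle inequality summed over the subtree.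

Summing over the children of the root and taking `K = √(log m)` gives
`c(A) ≤ 6 (log m / log log m) w(A)` for `m ≥ 3`. For `m ≤ 2`, taking `K = 2` gives
`c(A) ≤ 5 w(A)`, which together with `c(A) ≥ 18 w(A)` forces `w(A) = 0`.
-/

open Finset

section Arborescence

variable {V : Type} {r : V} {parent : V → V}

lemma IsArborescence.eq_root_of_iterate_eq_self (harb : IsArborescence r parent) {v : V} {k : ℕ}
    (hk : 0 < k) (h : parent^[k] v = v) : v = r := by
  obtain ⟨n, hn⟩ := harb.2 v
  have hper : Function.IsPeriodicPt parent (k * n) v :=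
    Function.IsPeriodicPt.mul_const (f := parent) h n
  rw [← hper, ← Nat.sub_add_cancel (Nat.le_mul_of_pos_left n hk), Function.iterate_add_apply, hn,
    Function.iterate_fixed harb.1]

variable [Fintype V]

@[simp]
lemma mem_children {v z : V} : z ∈ children parent v ↔ parent z = v ∧ z ≠ v := by
  simp [children]

@[simp]
lemma mem_desc {u v : V} : u ∈ desc parent v ↔ ∃ n, parent^[n] u = v := by
  simp [desc]

lemma self_mem_desc (v : V) : v ∈ desc parent v := mem_desc.2 ⟨0, rfl⟩

lemma one_le_card_desc (v : V) : (1 : ℝ) ≤ #(desc parent v) := by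
  exact_mod_cast card_pos.2 ⟨v, self_mem_desc v⟩

lemma desc_subset_of_mem_children {v z : V} (hz : z ∈ children parent v) :
    desc parent z ⊆ desc parent v := fun u hu => by
  obtain ⟨n, hn⟩ := mem_desc.1 hu
  exact mem_desc.2 ⟨n + 1, by rw [Function.iterate_succ_apply', hn, (mem_children.1 hz).1]⟩

lemma mem_desc_iff {u v : V} :
    u ∈ desc parent v ↔ u = v ∨ ∃ z ∈ children parent v, u ∈ desc parent z := by
  refine ⟨fun hu => ?_, ?_⟩
  · obtain ⟨n, hn⟩ := mem_desc.1 hu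
    induction n generalizing u with
    | zero => exact Or.inl hn
    | succ n ih =>
      rw [Function.iterate_succ_apply] at hn
      by_cases huv : u = v
      · exact Or.inl huv
      rcases ih (mem_desc.2 ⟨n, hn⟩) hn with hpu | ⟨z, hz, hpu⟩
      · exact Or.inr ⟨u, mem_children.2 ⟨hpu, huv⟩, self_mem_desc u⟩
      · obtain ⟨k, hk⟩ := mem_desc.1 hpu
        exact Or.inr ⟨z, hz, mem_desc.2 ⟨k + 1, hk⟩⟩
  · rintro (rfl | ⟨z, hz, hu⟩)
    · exact self_mem_desc u
    · exact desc_subset_of_mem_children hz hu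

lemma mem_desc_or_mem_desc {u x y : V} (hx : u ∈ desc parent x) (hy : u ∈ desc parent y) :
    x ∈ desc parent y ∨ y ∈ desc parent x := by
  obtain ⟨a, rfl⟩ := mem_desc.1 hx
  obtain ⟨b, rfl⟩ := mem_desc.1 hy
  rcases le_total a b with hab | hab
  · left
    exact mem_desc.2 ⟨b - a, by rw [← Function.iterate_add_apply, Nat.sub_add_cancel hab]⟩
  · right
    exact mem_desc.2 ⟨a - b, by rw [← Function.iterate_add_apply, Nat.sub_add_cancel hab]⟩

namespace IsArborescence

lemma ne_root_of_mem_children (harb : IsArborescence r parent) {v z : V} (hv : v ≠ r)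
    (hz : z ∈ children parent v) : z ≠ r := by
  rintro rfl
  have hpz := (mem_children.1 hz).1
  rw [harb.1] at hpz
  exact hv hpz.symm

lemma ne_root_of_mem_desc (harb : IsArborescence r parent) {u z : V} (hz : z ≠ r)
    (hu : u ∈ desc parent z) : u ≠ r := by
  rintro rfl
  obtain ⟨n, hn⟩ := mem_desc.1 hu
  exact hz (hn ▸ Function.iterate_fixed harb.1 n)

lemma not_mem_desc_of_mem_children (harb : IsArborescence r parent) {v z : V}
    (hz : z ∈ children parent v) : v ∉ desc parent z := fun hv => by
  obtain ⟨k, hk⟩ := mem_desc.1 hv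
  obtain ⟨hzv, hne⟩ := mem_children.1 hz
  have hvr : v = r := harb.eq_root_of_iterate_eq_self k.succ_pos
    (by rw [Function.iterate_succ_apply', hk, hzv])
  subst hvr
  exact hne (hk ▸ Function.iterate_fixed harb.1 k)

lemma eq_of_mem_children_of_mem_desc (harb : IsArborescence r parent) {v z z' : V}
    (hz : z ∈ children parent v) (hz' : z' ∈ children parent v) (h : z ∈ desc parent z') :
    z = z' := by
  obtain ⟨k, hk⟩ := mem_desc.1 h
  cases k with
  | zero => exact hk
  | succ k =>
    rw [Function.iterate_succ_apply, (mem_children.1 hz).1] at hk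
    exact absurd (mem_desc.2 ⟨k, hk⟩) (harb.not_mem_desc_of_mem_children hz')

lemma pairwiseDisjoint_desc_children (harb : IsArborescence r parent) (v : V) :
    (children parent v : Set V).PairwiseDisjoint (desc parent) := by
  intro z hz z' hz' hne
  refine Finset.disjoint_left.2 fun u hu hu' => hne ?_
  rcases mem_desc_or_mem_desc hu hu' with h | h
  · exact harb.eq_of_mem_children_of_mem_desc hz hz' h
  · exact (harb.eq_of_mem_children_of_mem_desc hz' hz h).symm

lemma sum_desc (harb : IsArborescence r parent) (f : V → ℝ) (v : V) :
    ∑ u ∈ desc parent v, f u = f v + ∑ z ∈ children parent v, ∑ u ∈ desc parent z, f u := by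
  classical
  have hdesc : desc parent v = insert v ((children parent v).biUnion (desc parent)) := by
    ext u
    simp only [mem_insert, mem_biUnion, ← mem_desc_iff]
  have hv : v ∉ (children parent v).biUnion (desc parent) := by
    simp only [mem_biUnion, not_exists, not_and]
    exact fun z hz => harb.not_mem_desc_of_mem_children hz
  rw [hdesc, sum_insert hv, sum_biUnion (harb.pairwiseDisjoint_desc_children v)]

lemma sum_nonRoot (harb : IsArborescence r parent) (f : V → ℝ) :
    ∑ u ∈ nonRoot r, f u = ∑ z ∈ children parent r, ∑ u ∈ desc parent z, f u := by
  classical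
  have hdesc : desc parent r = univ := eq_univ_of_forall fun u => mem_desc.2 (harb.2 u)
  have hnonRoot : nonRoot r = univ.erase r := filter_ne' univ r
  rw [hnonRoot, ← add_right_inj (f r), add_sum_erase _ _ (mem_univ r), ← hdesc,
    harb.sum_desc]

lemma card_desc_lt (harb : IsArborescence r parent) {v z : V} (hz : z ∈ children parent v) :
    #(desc parent z) < #(desc parent v) :=
  card_lt_card <| Finset.ssubset_iff_subset_ne.2 ⟨desc_subset_of_mem_children hz,
    fun h => harb.not_mem_desc_of_mem_children hz (h ▸ self_mem_desc v)⟩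

@[elab_as_elim]
theorem induction_on_children (harb : IsArborescence r parent) {P : V → Prop}
    (step : ∀ v, v ≠ r → (∀ z ∈ children parent v, P z) → P v) (v : V) (hv : v ≠ r) : P v :=
  step v hv fun z hz => induction_on_children harb step z (harb.ne_root_of_mem_children hv hz)
termination_by #(desc parent v)
decreasing_by exact harb.card_desc_lt hz

lemma sum_desc_nonneg (harb : IsArborescence r parent) {f : V → ℝ} (hf : ∀ v, v ≠ r → 0 ≤ f v)
    {z : V} (hz : z ≠ r) : 0 ≤ ∑ u ∈ desc parent z, f u :=
  sum_nonneg fun u hu => hf u (harb.ne_root_of_mem_desc hz hu)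

lemma card_desc_eq (harb : IsArborescence r parent) (v : V) :
    (#(desc parent v) : ℝ) = 1 + ∑ z ∈ children parent v, (#(desc parent z) : ℝ) := by
  simpa using harb.sum_desc (fun _ => 1) v

end IsArborescence
end Arborescence

lemma card_filter_lt_mul_le {ι : Type*} (s : Finset ι) {a : ι → ℝ} {N K : ℝ} (hN : 0 < N)
    (hK : 0 ≤ K) (ha : ∀ i ∈ s, 0 ≤ a i) (hsum : ∑ i ∈ s, a i ≤ N) :
    (#{i ∈ s | N < K * a i} : ℝ) ≤ K := by
  refine le_of_mul_le_mul_right ?_ hN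
  calc (#{i ∈ s | N < K * a i} : ℝ) * N = ∑ i ∈ s with N < K * a i, N := by
        rw [sum_const, nsmul_eq_mul]
    _ ≤ ∑ i ∈ s with N < K * a i, K * a i := sum_le_sum fun i hi => (mem_filter.1 hi).2.le
    _ ≤ ∑ i ∈ s, K * a i :=
        sum_le_sum_of_subset_of_nonneg (filter_subset _ _) fun i hi _ => mul_nonneg hK (ha i hi)
    _ ≤ K * N := by rw [← mul_sum]; exact mul_le_mul_of_nonneg_left hsum hK

noncomputable def boundCoeff (K N : ℝ) : ℝ := 2 * K + Real.log N / Real.log K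

section boundCoeff

variable {K N N' : ℝ}

lemma boundCoeff_le_boundCoeff (hK : 1 < K) (hN : 0 < N) (h : N ≤ N') :
    boundCoeff K N ≤ boundCoeff K N' := by
  unfold boundCoeff
  gcongr
  exact Real.log_pos hK |>.le

lemma one_le_boundCoeff_sub (hK : 1 < K) (hN : 0 < N) (h : K * N ≤ N') :
    1 ≤ boundCoeff K N' - boundCoeff K N := by
  have hlogK := Real.log_pos hK
  have hlog : Real.log K + Real.log N ≤ Real.log N' := by
    rw [← Real.log_mul (by positivity) hN.ne']
    exact Real.log_le_log (by positivity) h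
  rw [boundCoeff, boundCoeff, add_sub_add_left_eq_sub, ← sub_div, le_div_iff₀ hlogK]
  linarith

lemma one_add_le_boundCoeff (hK : 1 < K) (hN : 1 ≤ N) : 1 + K ≤ boundCoeff K N := by
  have := div_nonneg (Real.log_nonneg hN) (Real.log_pos hK).le
  rw [boundCoeff]
  linarith

lemma boundCoeff_two_le {n : ℕ} (hn : n ≤ 2) : boundCoeff 2 n ≤ 5 := by
  interval_cases n <;> norm_num [boundCoeff]

lemma boundCoeff_sqrt_log_le {x : ℝ} (hx : 1 < Real.log x) :
    boundCoeff √(Real.log x) x ≤ 6 * (Real.log x / Real.log (Real.log x)) := by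
  set L := Real.log x
  have hL : 0 < L := by linarith
  have hlogL : 0 < Real.log L := Real.log_pos hx
  have hsqrt : Real.log √L ≤ √L - 1 := Real.log_le_sub_one_of_pos (Real.sqrt_pos.2 hL)
  rw [Real.log_sqrt hL.le] at hsqrt
  have hkey : 2 * √L ≤ 4 * (L / Real.log L) := by
    rw [mul_div_assoc', le_div_iff₀ hlogL]
    nlinarith [Real.sq_sqrt hL.le, Real.sqrt_nonneg L]
  have hhalf : L / (Real.log L / 2) = 2 * (L / Real.log L) := by field_simp
  rw [boundCoeff, Real.log_sqrt hL.le, hhalf]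
  linarith

end boundCoeff

namespace IsArborescence

variable {V : Type} [Fintype V] {r : V} {parent : V → V} {c w : V → ℝ}

lemma le_sum_desc_of_combinedTriangle (harb : IsArborescence r parent)
    (htri : CombinedTriangle r parent c w) {v : V} (hv : v ≠ r) :
    c v ≤ ∑ u ∈ desc parent v, w u := by
  refine harb.induction_on_children (fun v hv ih => ?_) v hv
  calc c v ≤ w v + ∑ z ∈ children parent v, c z := htri v hv
    _ ≤ w v + ∑ z ∈ children parent v, ∑ u ∈ desc parent z, w u := by
        gcongr with z hz
        exact ih z hz
    _ = ∑ u ∈ desc parent v, w u := (harb.sum_desc w v).symm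

lemma exists_le_of_combinedTwoOpt (harb : IsArborescence r parent)
    (hc : ∀ v, v ≠ r → 0 ≤ c v) (htri : CombinedTriangle r parent c w)
    (h2opt : CombinedTwoOpt r parent c w) {v : V} (hv : v ≠ r) :
    ∃ M, 0 ≤ M ∧ (∀ z ∈ children parent v, c z ≤ M) ∧
      c v + 2 * M ≤ w v + ∑ z ∈ children parent v, c z := by
  classical
  rcases (children parent v).eq_empty_or_nonempty with hleaf | hne
  · exact ⟨0, le_rfl, by simp [hleaf], by simpa [hleaf] using htri v hv⟩
  · obtain ⟨z, hz, hmax⟩ := exists_max_image _ c hne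
    refine ⟨c z, hc z (harb.ne_root_of_mem_children hv hz), hmax, ?_⟩
    have := h2opt v hv z hz
    rw [← sum_erase_add _ _ hz]
    linarith

lemma sum_children_le (harb : IsArborescence r parent) (hw : ∀ v, v ≠ r → 0 ≤ w v)
    (htri : CombinedTriangle r parent c w) {K : ℝ} (hK : 1 < K) {v : V} (hv : v ≠ r) {M : ℝ}
    (hM : 0 ≤ M) (hcM : ∀ z ∈ children parent v, c z ≤ M) :
    ∑ z ∈ children parent v, c z ≤ K * M + ∑ z ∈ children parent v,
      (boundCoeff K #(desc parent v) - boundCoeff K #(desc parent z)) *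
        ∑ u ∈ desc parent z, w u := by
  classical
  set N : V → ℝ := fun x => #(desc parent x)
  have hN : ∀ x, 0 < N x := fun x => zero_lt_one.trans_le (one_le_card_desc x)
  have hW : ∀ z ∈ children parent v, 0 ≤ ∑ u ∈ desc parent z, w u := fun z hz =>
    harb.sum_desc_nonneg hw (harb.ne_root_of_mem_children hv hz)
  have hheavy : ∑ z ∈ children parent v with N v < K * N z, c z ≤ K * M :=
    calc ∑ z ∈ children parent v with N v < K * N z, c z
        ≤ #{z ∈ children parent v | N v < K * N z} * M := by
          rw [← nsmul_eq_mul, ← sum_const]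
          exact sum_le_sum fun z hz => hcM z (mem_filter.1 hz).1
      _ ≤ K * M := by
          refine mul_le_mul_of_nonneg_right (card_filter_lt_mul_le _ (hN v) (by linarith)
            (fun z _ => (hN z).le) ?_) hM
          linarith [harb.card_desc_eq v]
  have hlight : ∑ z ∈ children parent v with ¬ N v < K * N z, c z ≤
      ∑ z ∈ children parent v with ¬ N v < K * N z,
        (boundCoeff K (N v) - boundCoeff K (N z)) * ∑ u ∈ desc parent z, w u := by
    refine sum_le_sum fun z hz => ?_
    obtain ⟨hz, hlight⟩ := mem_filter.1 hz
    calc c z ≤ ∑ u ∈ desc parent z, w u :=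
          harb.le_sum_desc_of_combinedTriangle htri (harb.ne_root_of_mem_children hv hz)
      _ ≤ _ := le_mul_of_one_le_left (hW z hz)
          (one_le_boundCoeff_sub hK (hN z) (not_lt.1 hlight))
  have hextend : ∑ z ∈ children parent v with ¬ N v < K * N z,
        (boundCoeff K (N v) - boundCoeff K (N z)) * ∑ u ∈ desc parent z, w u ≤
      ∑ z ∈ children parent v,
        (boundCoeff K (N v) - boundCoeff K (N z)) * ∑ u ∈ desc parent z, w u := by
    refine sum_le_sum_of_subset_of_nonneg (filter_subset _ _) fun z hz _ => mul_nonneg ?_ (hW z hz)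
    exact sub_nonneg.2 (boundCoeff_le_boundCoeff hK (hN z)
      (Nat.cast_le.2 (card_le_card (desc_subset_of_mem_children hz))))
  rw [← sum_filter_add_sum_filter_not _ (fun z => N v < K * N z)]
  linarith

theorem sum_desc_add_mul_le (harb : IsArborescence r parent) (hc : ∀ v, v ≠ r → 0 ≤ c v)
    (hw : ∀ v, v ≠ r → 0 ≤ w v) (htri : CombinedTriangle r parent c w)
    (h2opt : CombinedTwoOpt r parent c w) {K : ℝ} (hK : 1 < K) {v : V} (hv : v ≠ r) :
    ∑ u ∈ desc parent v, c u + K * c v ≤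
      boundCoeff K #(desc parent v) * ∑ u ∈ desc parent v, w u := by
  refine harb.induction_on_children (fun v hv ih => ?_) v hv
  obtain ⟨M, hM, hcM, hlocal⟩ := harb.exists_le_of_combinedTwoOpt hc htri h2opt hv
  have hsplit := harb.sum_children_le hw htri hK hv hM hcM
  have hchildren : ∑ z ∈ children parent v, ∑ u ∈ desc parent z, c u +
        K * ∑ z ∈ children parent v, c z ≤
      ∑ z ∈ children parent v, boundCoeff K #(desc parent z) * ∑ u ∈ desc parent z, w u := by
    rw [mul_sum, ← sum_add_distrib]
    exact sum_le_sum ih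
  have hcoeff : (1 + K) * w v ≤ boundCoeff K #(desc parent v) * w v :=
    mul_le_mul_of_nonneg_right (one_add_le_boundCoeff hK (one_le_card_desc v)) (hw v hv)
  have hlocalK := mul_le_mul_of_nonneg_left hlocal (zero_le_one.trans hK.le)
  simp only [sub_mul, sum_sub_distrib, ← mul_sum] at hsplit
  rw [harb.sum_desc c, harb.sum_desc w]
  nlinarith [mul_nonneg (zero_le_one.trans hK.le) hM]

theorem sum_nonRoot_le (harb : IsArborescence r parent) (hc : ∀ v, v ≠ r → 0 ≤ c v)
    (hw : ∀ v, v ≠ r → 0 ≤ w v) (htri : CombinedTriangle r parent c w)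
    (h2opt : CombinedTwoOpt r parent c w) {K : ℝ} (hK : 1 < K) :
    ∑ v ∈ nonRoot r, c v ≤ boundCoeff K #(nonRoot r) * ∑ v ∈ nonRoot r, w v := by
  rw [harb.sum_nonRoot c, harb.sum_nonRoot w, mul_sum]
  refine sum_le_sum fun z hz => ?_
  have hzr : z ≠ r := (mem_children.1 hz).2
  have hcard : (#(desc parent z) : ℝ) ≤ #(nonRoot r) := by
    refine Nat.cast_le.2 (card_le_card fun u hu => ?_)
    simpa [nonRoot] using harb.ne_root_of_mem_desc hzr hu
  calc ∑ u ∈ desc parent z, c u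
      ≤ ∑ u ∈ desc parent z, c u + K * c z :=
        le_add_of_nonneg_right (mul_nonneg (zero_le_one.trans hK.le) (hc z hzr))
    _ ≤ boundCoeff K #(desc parent z) * ∑ u ∈ desc parent z, w u :=
        harb.sum_desc_add_mul_le hc hw htri h2opt hK hzr
    _ ≤ boundCoeff K #(nonRoot r) * ∑ u ∈ desc parent z, w u :=
        mul_le_mul_of_nonneg_right
          (boundCoeff_le_boundCoeff hK (zero_lt_one.trans_le (one_le_card_desc z)) hcard)
          (harb.sum_desc_nonneg hw hzr)

end IsArborescence

theorem arborescence_main_lemma {V : Type} [Fintype V]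
    (r : V) (parent : V → V) (c w : V → ℝ)
    (harb : IsArborescence r parent)
    (hc : ∀ v : V, v ≠ r → 0 < c v) (hw : ∀ v : V, v ≠ r → 0 < w v)
    (htri : CombinedTriangle r parent c w)
    (h2opt : CombinedTwoOpt r parent c w)
    (hbig : 18 * ∑ v ∈ nonRoot r, w v ≤ ∑ v ∈ nonRoot r, c v) :
    ∑ v ∈ nonRoot r, c v ≤
      12 * (Real.log ((nonRoot r).card : ℝ) / Real.log (Real.log ((nonRoot r).card : ℝ))) *
        ∑ v ∈ nonRoot r, w v := by
  have hc' v hv := (hc v hv).le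
  have hw' v hv := (hw v hv).le
  have hW : 0 ≤ ∑ v ∈ nonRoot r, w v := sum_nonneg fun v hv => hw' v (by simpa [nonRoot] using hv)
  rcases le_or_gt #(nonRoot r) 2 with hsmall | hlarge
  · have hbound := harb.sum_nonRoot_le hc' hw' htri h2opt one_lt_two
    have hW0 : ∑ v ∈ nonRoot r, w v = 0 := by nlinarith [boundCoeff_two_le hsmall]
    simpa [hW0] using hbound
  · have h3 : (3 : ℝ) ≤ #(nonRoot r) := by exact_mod_cast hlarge
    set m : ℝ := (#(nonRoot r) : ℝ)
    have hlog : 1 < Real.log m := by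
      refine (Real.lt_log_iff_exp_lt (by positivity)).2 ?_
      linarith [Real.exp_one_lt_d9]
    have hq : 0 ≤ Real.log m / Real.log (Real.log m) :=
      div_nonneg (by linarith) (Real.log_nonneg hlog.le)
    calc ∑ v ∈ nonRoot r, c v
        ≤ boundCoeff √(Real.log m) m * ∑ v ∈ nonRoot r, w v :=
          harb.sum_nonRoot_le hc' hw' htri h2opt (Real.lt_sqrt_of_sq_lt (by rwa [one_pow]))
      _ ≤ 6 * (Real.log m / Real.log (Real.log m)) * ∑ v ∈ nonRoot r, w v := by
          gcongr
          exact boundCoeff_sqrt_log_le hlog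
      _ ≤ 12 * (Real.log m / Real.log (Real.log m)) * ∑ v ∈ nonRoot r, w v := by
          gcongr
          norm_num
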